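/- Fix r ≥ 1. Let a₁,…,a_k be r-coloured permutations such that the triples (des(a_i), comaj(a_i), col(a_i)) are pairwise distinct. Then the power series Φ(a_i) = p^{col(a_i)} x^{comaj(a_i)} t^{des(a_i)} / ((1−t)(1−xt)⋯(1−x^{|a_i|}t)), i = 1,…,k, are linearly independent over ℚ in ℚ[p₀,…,p_{r−1},x]⟦t⟧. -/

import Mathlib

/-!
Write `Φ(a) = C (p^{col a} x^{comaj a}) · t^{des a} · G` with `G` of constant term `1`. Then `Φ(a)`
has no terms below `t^{des a}`, and its `t^{des a}`-coefficient is the single monomial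
`p^{col a} x^{comaj a}`. So the coefficient functionals `F ↦ [t^d x^m p^μ] F` taken at the triples
`(des, comaj, col)` of the `aᵢ` pair with the `Φ(aᵢ)` in a unitriangular way once the `aᵢ` are
ordered by `des`, and a unitriangular system is linearly independent.
-/

open scoped Classical

noncomputable section

/-- A coloured permutation: a list of (symbol, colour) pairs. -/
abbrev CPerm : Type := List (ℕ × ℕ)

/-- `a` is a genuine coloured permutation: distinct, positive symbols. -/
def IsCPerm (a : CPerm) : Prop :=
  (a.map Prod.fst).Nodup ∧ ∀ p ∈ a, 0 < p.1

/-- The colour order on coloured integers: `p < q` iff the colour of `p` is bigger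
(as an integer), or the colours agree and the symbol of `p` is smaller. -/
def cLt (p q : ℕ × ℕ) : Prop :=
  q.2 < p.2 ∨ (p.2 = q.2 ∧ p.1 < q.1)

instance : DecidableRel cLt := fun p q => by unfold cLt; infer_instance

/-- The descent set of a coloured permutation (positions `0,…,n−1`; position `i ≥ 1`
is a descent iff the `(i+1)`-st entry is smaller than the `i`-th entry (1-indexed)
in the colour order; `0` is a descent iff the first colour is nonzero). -/
def DesSet (a : CPerm) : Finset ℕ :=
  (Finset.range a.length).filter fun i =>
    if i = 0 then (a.getD 0 (0, 0)).2 ≠ 0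
    else cLt (a.getD i (0, 0)) (a.getD (i - 1) (0, 0))

/-- Descent number. -/
def des (a : CPerm) : ℕ := (DesSet a).card

/-- Comajor index. -/
def comaj (a : CPerm) : ℕ := ∑ i ∈ DesSet a, (a.length - i)

/-- `colVec a j` is the number of entries of `a` of colour `j`. -/
def colVec (a : CPerm) (j : ℕ) : ℕ := (a.map Prod.snd).count j

/-- The multiset of shuffles of two lists. -/
def shuffles {α : Type*} : List α → List α → Multiset (List α)
  | [], bs => {bs}
  | a :: as, [] => {a :: as}
  | a :: as, b :: bs =>
      ((shuffles as (b :: bs)).map (a :: ·)) + ((shuffles (a :: as) bs).map (b :: ·))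
  termination_by as bs => as.length + bs.length

/-- The set of symbols of a coloured permutation. -/
def symbols (a : CPerm) : Finset ℕ := (a.map Prod.fst).toFinset

/-- The set of nonzero colours of a coloured permutation. -/
def paletteStar (a : CPerm) : Finset ℕ := ((a.map Prod.snd).toFinset).erase 0

/-- Two coloured permutations are symbol-disjoint if they share no symbols. -/
def SymbolDisjoint (a b : CPerm) : Prop := Disjoint (symbols a) (symbols b)

/-- `a` is `r`-coloured: all colours lie in `{0,…,r−1}`. -/
def RColoured (r : ℕ) (a : CPerm) : Prop := ∀ p ∈ a, p.2 < r

/-- Symbols of a coloured configuration (= multiset of coloured permutations). -/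
def msymbols (f : Multiset CPerm) : Finset ℕ := (f.map symbols).sup

/-- `palette*` of a coloured configuration. -/
def mpalette (f : Multiset CPerm) : Finset ℕ := (f.map paletteStar).sup

/-- The shuffle of two coloured configurations (bi-additive extension). -/
def mshuffle (f g : Multiset CPerm) : Multiset CPerm :=
  f.bind fun a => g.bind fun b => shuffles a b

/-- Hadamard product of formal power series. -/
def hadamard {R : Type*} [Semiring R] (A B : PowerSeries R) : PowerSeries R :=
  PowerSeries.mk fun k => (PowerSeries.coeff k) A * (PowerSeries.coeff k) B

/-- The geometric series `1/(1 − c·Y) = Σ_k c^k Y^k`. -/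
def geom {R : Type*} [Semiring R] (c : R) : PowerSeries R :=
  PowerSeries.mk fun k => c ^ k

/-- The field ℚ(X) of rational functions. -/
abbrev K : Type := RatFunc ℚ

/-- The variable X of ℚ(X). -/
def XX : K := RatFunc.X

/-- Membership in `U = {±X^k : k ∈ ℤ}`. -/
def InU (u : K) : Prop := ∃ k : ℤ, u = XX ^ k ∨ u = -XX ^ k

/-- `α(a) = Π_i α(γ_i)`. -/
def alphaProd (α : ℕ → K) (a : CPerm) : K := (a.map fun p => α p.2).prod

/-- The summand of `W^ε_{f,α}` corresponding to a single coloured permutation. -/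
def Wterm (ε : ℤ) (α : ℕ → K) (a : CPerm) : PowerSeries K :=
  (PowerSeries.C : K →+* PowerSeries K) (alphaProd α a * XX ^ (ε * (comaj a : ℤ))) * PowerSeries.X ^ des a *
    ∏ i ∈ Finset.range (a.length + 1), geom (XX ^ (ε * (i : ℤ)))

/-- `W^ε_{f,α} = Σ_a f_a α(a) X^{ε·comaj(a)} Y^{des(a)} / ((1−Y)⋯(1−X^{ε|a|}Y))`. -/
def W (ε : ℤ) (α : ℕ → K) (f : Multiset CPerm) : PowerSeries K :=
  (f.map (Wterm ε α)).sum

/-- `(f,α)` is a labelled coloured configuration. -/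
def IsLCC (f : Multiset CPerm) (α : ℕ → K) : Prop :=
  (∀ a ∈ f, IsCPerm a) ∧ (∀ c, InU (α c)) ∧ (∀ c ∉ mpalette f, α c = 1)


/-- The polynomial ring `ℚ[p₀,p₁,…][x]`; `x` is `Polynomial.X` and `p_j` is
`MvPolynomial.X j`. -/
abbrev PXRing : Type := Polynomial (MvPolynomial ℕ ℚ)

/-- The monomial `p^{col(a)} = p₀^{col₀(a)} ⋯`. -/
def pMon (a : CPerm) : MvPolynomial ℕ ℚ := (a.map fun p => MvPolynomial.X p.2).prod

/-- `Φ(a) = p^{col(a)} x^{comaj(a)} t^{des(a)} / ((1−t)(1−xt)⋯(1−xⁿt))`. -/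
def Phi (a : CPerm) : PowerSeries PXRing :=
  (PowerSeries.C : PXRing →+* PowerSeries PXRing) (Polynomial.C (pMon a) * Polynomial.X ^ comaj a) *
    PowerSeries.X ^ des a *
    ∏ i ∈ Finset.range (a.length + 1), geom ((Polynomial.X : PXRing) ^ i)

theorem linearIndependent_of_triangular {ι κ R M : Type*} [LinearOrder κ] [WellFoundedLT κ]
    [Ring R] [AddCommGroup M] [Module R M] (v : ι → M) (deg : ι → κ) (ℓ : ι → M →ₗ[R] R)
    (hdiag : ∀ i, ℓ i (v i) = 1) (hzero : ∀ i j, i ≠ j → deg i ≤ deg j → ℓ i (v j) = 0) :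
    LinearIndependent R v := by
  rw [linearIndependent_iff']
  intro s g hsum
  suffices H : ∀ κ₀, ∀ i ∈ s, deg i = κ₀ → g i = 0 from fun i hi => H _ i hi rfl
  intro κ₀
  induction κ₀ using WellFoundedLT.induction with
  | _ κ₀ IH =>
    intro i hi hdeg
    have hterm : ∀ j ∈ s, j ≠ i → g j * ℓ i (v j) = 0 := by
      intro j hj hji
      rcases lt_or_ge (deg j) κ₀ with hlt | hge
      · rw [IH _ hlt j hj rfl, zero_mul]
      · rw [hzero i j hji.symm (hdeg ▸ hge), mul_zero]
    have := congrArg (ℓ i) hsum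
    simp only [map_sum, map_smul, smul_eq_mul, map_zero] at this
    rwa [Finset.sum_eq_single_of_mem i hi hterm, hdiag, mul_one] at this

theorem PowerSeries.coeff_C_mul_X_pow_mul_of_le {R : Type*} [Semiring R] (c : R)
    (G : PowerSeries R) (hG : constantCoeff G = 1) {d n : ℕ} (h : d ≤ n) :
    coeff d (C c * X ^ n * G) = if d = n then c else 0 := by
  rw [mul_assoc, coeff_C_mul, coeff_X_pow_mul']
  split_ifs with h₁ h₂ h₂
  · rw [h₂, Nat.sub_self, coeff_zero_eq_constantCoeff, hG, mul_one]
  · omega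
  · omega
  · rw [mul_zero]

theorem constantCoeff_geom {R : Type*} [Semiring R] (c : R) :
    PowerSeries.constantCoeff (geom c) = 1 := by
  simp [geom]

def colFinsupp (a : CPerm) : ℕ →₀ ℕ := Multiset.toFinsupp (a.map Prod.snd : Multiset ℕ)

theorem coe_colFinsupp (a : CPerm) : ⇑(colFinsupp a) = colVec a := by
  ext j
  simp [colFinsupp, colVec, Multiset.toFinsupp_apply]

theorem pMon_eq_monomial (a : CPerm) : pMon a = MvPolynomial.monomial (colFinsupp a) 1 := by
  induction a with
  | nil => simp [pMon, colFinsupp]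
  | cons p l ih =>
    have : colFinsupp (p :: l) = Finsupp.single p.2 1 + colFinsupp l := by
      rw [colFinsupp, List.map_cons, ← Multiset.cons_coe, ← Multiset.singleton_add,
        Multiset.toFinsupp_add, Multiset.toFinsupp_singleton, colFinsupp]
    rw [pMon, List.map_cons, List.prod_cons, ← pMon, ih, this, MvPolynomial.monomial_single_add,
      pow_one]

theorem coeff_Phi_of_le (a : CPerm) {d : ℕ} (h : d ≤ des a) :
    PowerSeries.coeff d (Phi a) =
      if d = des a then Polynomial.C (pMon a) * Polynomial.X ^ comaj a else 0 := by
  refine PowerSeries.coeff_C_mul_X_pow_mul_of_le _ _ ?_ h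
  simp [map_prod, constantCoeff_geom]

def coeffFunctional (d m : ℕ) (μ : ℕ →₀ ℕ) : PowerSeries PXRing →ₗ[ℚ] ℚ :=
  MvPolynomial.lcoeff ℚ μ ∘ₗ (Polynomial.lcoeff _ m).restrictScalars ℚ ∘ₗ
    (PowerSeries.coeff d).restrictScalars ℚ

theorem coeffFunctional_Phi_of_le (a : CPerm) {d : ℕ} (m : ℕ) (μ : ℕ →₀ ℕ) (h : d ≤ des a) :
    coeffFunctional d m μ (Phi a) =
      if (d, m, μ) = (des a, comaj a, colFinsupp a) then 1 else 0 := by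
  simp only [coeffFunctional, LinearMap.coe_comp, Function.comp_apply,
    LinearMap.coe_restrictScalars, coeff_Phi_of_le a h]
  obtain rfl | hd := eq_or_ne d (des a)
  · by_cases hm : m = comaj a
    · simp [hm, pMon_eq_monomial, MvPolynomial.coeff_monomial, eq_comm]
    · simp [hm]
  · simp [hd]

theorem linearIndependent_Phi_general (k : ℕ) (a : Fin k → CPerm)
    (hdist : Function.Injective fun i => (des (a i), comaj (a i), colVec (a i))) :
    LinearIndependent ℚ fun i => Phi (a i) := by
  refine linearIndependent_of_triangular _ (fun i => des (a i))
    (fun i => coeffFunctional (des (a i)) (comaj (a i)) (colFinsupp (a i)))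
    (fun i => by rw [coeffFunctional_Phi_of_le _ _ _ le_rfl, if_pos rfl]) fun i j hij hle => ?_
  rw [coeffFunctional_Phi_of_le _ _ _ hle, if_neg]
  intro h
  simp only [Prod.mk.injEq] at h
  obtain ⟨hdes, hcomaj, hcol⟩ := h
  exact hij (hdist (by simp only [hdes, hcomaj, ← coe_colFinsupp, hcol]))

/-- **Lemma.** If the triples `(des(aᵢ), comaj(aᵢ), col(aᵢ))` attached to
`r`-coloured permutations `a₁,…,a_k` are pairwise distinct, then the power series
`Φ(a₁),…,Φ(a_k)` are linearly independent over `ℚ`. -/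
theorem linearIndependent_Phi (r : ℕ) (hr : 1 ≤ r) (k : ℕ) (a : Fin k → CPerm)
    (ha : ∀ i, IsCPerm (a i)) (hra : ∀ i, RColoured r (a i))
    (hdist : Function.Injective fun i => (des (a i), comaj (a i), colVec (a i))) :
    LinearIndependent ℚ fun i => Phi (a i) :=
  linearIndependent_Phi_general k a hdist
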